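/- If \widehat{T}' is a marked tree and \widehat{T} = π(\widehat{T}'), with reduced configurations C' = R(f(\widehat{T}')) and C = R(f(\widehat{T})), then W(C' → C) ≠ 0, i.e., the TASEP allows a transition from C' to C. -/

import Mathlib

/-- Plane binary trees: every internal vertex has exactly two ordered children. -/
inductive PTree where
  | leaf : PTree
  | node : PTree → PTree → PTree
  deriving DecidableEq

namespace PTree

/-- number of leaves (endpoints) -/
def numLeaves : PTree → ℕ
  | leaf => 1
  | node l r => numLeaves l + numLeaves r

/-- directions of the leaves of a subtree which is itself a `b`-child
(`true` = left child, `false` = right child), in left-to-right order. -/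
def dirsAux : PTree → Bool → List Bool
  | leaf, b => [b]
  | node l r, _ => dirsAux l true ++ dirsAux r false

/-- the left/right-child directions of all leaves of a tree, left to right
(`true` = left child, `false` = right child). -/
def dirs : PTree → List Bool
  | leaf => []
  | node l r => dirsAux l true ++ dirsAux r false

/-- The reduction map `R`: the directions of the 2nd through (n+1)-th leaves;
`true` = • (occupied site, left child), `false` = ∘ (empty site, right child). -/
def red (T : PTree) : List Bool := ((dirs T).drop 1).dropLast

/-- number of internal vertices on the path from the leftmost leaf to the root
(root included). -/
def lCount : PTree → ℕ
  | leaf => 0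
  | node l _ => lCount l + 1

/-- number of internal vertices on the path from the rightmost leaf to the root
(root included). -/
def rCount : PTree → ℕ
  | leaf => 0
  | node _ r => rCount r + 1

/-- number of last branching vertices (internal vertices whose two children are leaves). -/
def lbCount : PTree → ℕ
  | leaf => 0
  | node leaf leaf => 1
  | node l r => lbCount l + lbCount r

end PTree

/-- Marked plane binary trees: a plane binary tree with exactly one of its
last branching vertices marked (the constructor `mark` is the marked vertex,
a vertex with two leaf children). -/
inductive MTree where
  | mark : MTree
  | nodeL : MTree → PTree → MTree
  | nodeR : PTree → MTree → MTree
  deriving DecidableEq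

namespace MTree

/-- forgetful map to plane binary trees -/
def forget : MTree → PTree
  | mark => .node .leaf .leaf
  | nodeL l r => .node (forget l) r
  | nodeR l r => .node l (forget r)

/-- collapse the marked vertex (with its two leaf children) to a single leaf. -/
def collapseT : MTree → PTree
  | mark => .leaf
  | nodeL l r => .node (collapseT l) r
  | nodeR l r => .node l (collapseT r)

/-- index (left to right, starting from 0) of the leaf of `collapseT` obtained
by collapsing the marked vertex. -/
def markIdx : MTree → ℕ
  | mark => 0
  | nodeL l _ => markIdx l
  | nodeR l r => l.numLeaves + markIdx r

end MTree

/-- replace the `i`-th leaf of a tree by a marked last branching vertex. -/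
def expand : PTree → ℕ → MTree
  | .leaf, _ => .mark
  | .node l r, i =>
      if i < l.numLeaves then .nodeL (expand l i) r
      else .nodeR l (expand r (i - l.numLeaves))

/-- index of the next right-child (`false`) leaf strictly after position `i`;
if there is none, the index of the rightmost left-child (`true`) leaf. -/
def nextFalseIdx (w : List Bool) (i : ℕ) : ℕ :=
  if (w.drop (i+1)).findIdx (fun b => !b) < (w.drop (i+1)).length
  then i + 1 + (w.drop (i+1)).findIdx (fun b => !b)
  else w.length - 1 - (w.reverse.findIdx (fun b => b))

/-- index of the closest left-child (`true`) leaf strictly before position `i`;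
if there is none, the index of the leftmost right-child (`false`) leaf. -/
def prevTrueIdx (w : List Bool) (i : ℕ) : ℕ :=
  if ((w.take i).reverse).findIdx (fun b => b) < i
  then i - 1 - ((w.take i).reverse).findIdx (fun b => b)
  else w.findIdx (fun b => !b)

/-- position of the leaf where the removed segment is re-glued by `π`. -/
def target (w : List Bool) (i : ℕ) : ℕ :=
  if w.getD i true then prevTrueIdx w i else nextFalseIdx w i

/-- The map `π` on marked trees: remove the segment joining the marked vertex to
its left (resp. right) leaf when the marked vertex is a right (resp. left) child,
and glue it to the next right- (resp. left-) child leaf to the right (resp. left),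
with the boundary rule when no such leaf exists; the new vertex is marked. -/
def piM (M : MTree) : MTree :=
  expand M.collapseT (target M.collapseT.dirs M.markIdx)

open Classical in
/-- Transition rates of the `n`-site open-boundary TASEP, on configurations
encoded as lists of booleans (`true` = •, `false` = ∘). -/
noncomputable def rate (α β : ℝ) (C C' : List Bool) : ℝ :=
  if ∃ A, C = false :: A ∧ C' = true :: A then α
  else if ∃ A, C = A ++ [true] ∧ C' = A ++ [false] then β
  else if ∃ A A', C = A ++ true :: false :: A' ∧ C' = A ++ false :: true :: A' then 1
  else 0

/-- number of active bonds of a configuration: injection at site 1 if empty,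
extraction at site n if occupied, and hops across •∘ pairs. -/
def activeCount (C : List Bool) : ℕ :=
  (if C.head? = some false then 1 else 0) +
  ((C.zip C.tail).count (true, false)) +
  (if C.getLast? = some true then 1 else 0)

/-- the weight `μ(T) = α^{-l(T)} β^{-r(T)}` of a plane binary tree. -/
noncomputable def mu (α β : ℝ) (T : PTree) : ℝ :=
  α ^ (-(T.lCount : ℤ)) * β ^ (-(T.rCount : ℤ))

/-- number of internal vertices on the path from the leftmost leaf to the root,
excluding the marked vertex. -/
def lCountM : MTree → ℕ
  | .mark => 0
  | .nodeL l _ => lCountM l + 1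
  | .nodeR l _ => l.lCount + 1

/-- number of internal vertices on the path from the rightmost leaf to the root,
excluding the marked vertex. -/
def rCountM : MTree → ℕ
  | .mark => 0
  | .nodeR _ r => rCountM r + 1
  | .nodeL _ r => r.rCount + 1

/-- the weight `μ̂` of a marked tree, excluding the marked vertex from the counts. -/
noncomputable def muHat (α β : ℝ) (M : MTree) : ℝ :=
  α ^ (-(lCountM M : ℤ)) * β ^ (-(rCountM M : ℤ))

/-!
Read the leaves of a plane binary tree from left to right and record `true` (•) for a left
child and `false` (∘) for a right child. Collapsing the marked cherry of `T̂'` gives a tree whose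
word `w` starts with • and ends with ∘, and both `f(T̂')` and `f(π T̂')` are obtained from `w` by
replacing one letter by •∘: the letter at the marked position `i`, resp. at the target `j`.
If `w[i] = •`, then `j` is the previous •, and `w` is constantly ∘ strictly between `j` and `i`;
if `w[i] = ∘`, then `j` is the next ∘ and `w` is constantly • in between. In both cases the two
expanded words differ by a single swap •∘ ↔ ∘•, a bulk hop of the TASEP once the first and last
letters are removed. If there is no such `j`, the boundary rule makes `i` the first (resp. last)
position and the two reduced words differ by an injection (resp. an extraction).
-/

namespace List

lemma cons_replicate_append {α : Type*} (b : α) (k : ℕ) (l : List α) :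
    b :: (replicate k b ++ l) = replicate k b ++ b :: l := by
  rw [← cons_append, ← replicate_succ, replicate_succ', append_assoc,
    singleton_append]

lemma findIdx_replicate_append_cons {α : Type*} {p : α → Bool} {a x : α}
    (ha : p a = false) (hx : p x = true) (k : ℕ) (l : List α) :
    (replicate k a ++ x :: l).findIdx p = k := by
  induction k with
  | zero => simp [findIdx_cons, hx]
  | succ k ih => simp [replicate_succ, findIdx_cons, ha, ih]

lemma eq_replicate_or_eq_append_not_cons_replicate (l : List Bool) (b : Bool) :
    l = replicate l.length b ∨ ∃ Z k, l = Z ++ (!b) :: replicate k b := by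
  induction l using reverseRecOn with
  | nil => exact Or.inl rfl
  | append_singleton l x ih =>
    rcases Bool.eq_or_eq_not x b with rfl | rfl
    · rcases ih with hl | ⟨Z, k, rfl⟩
      · exact Or.inl (by rw [length_append, length_singleton, replicate_succ', ← hl])
      · exact Or.inr ⟨Z, k + 1, by simp [replicate_succ']⟩
    · exact Or.inr ⟨l, 0, by simp⟩

lemma eq_replicate_or_eq_replicate_append_not_cons (l : List Bool) (b : Bool) :
    l = replicate l.length b ∨ ∃ k D, l = replicate k b ++ (!b) :: D := by
  induction l with
  | nil => exact Or.inl rfl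
  | cons x l ih =>
    rcases Bool.eq_or_eq_not x b with rfl | rfl
    · rcases ih with hl | ⟨k, D, rfl⟩
      · exact Or.inl (by rw [length_cons, replicate_succ, ← hl])
      · exact Or.inr ⟨k + 1, D, by simp [replicate_succ]⟩
    · exact Or.inr ⟨0, l, by simp⟩

end List

section Words

open List

def sprout (w : List Bool) (k : ℕ) : List Bool := w.take k ++ true :: false :: w.drop (k + 1)

lemma sprout_append_of_lt {a b : List Bool} {i : ℕ} (h : i < a.length) :
    sprout (a ++ b) i = sprout a i ++ b := by
  simp [sprout, take_append_of_le_length h.le, drop_append_of_le_length h]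

lemma sprout_append_add (a b : List Bool) (i : ℕ) :
    sprout (a ++ b) (a.length + i) = a ++ sprout b i := by
  simp [sprout, take_append, drop_append, take_of_length_le,
    drop_of_length_le, Nat.add_assoc]

lemma sprout_append_cons (P S : List Bool) (x : Bool) :
    sprout (P ++ x :: S) P.length = P ++ true :: false :: S := by
  simp [sprout]

def dropEnds (l : List Bool) : List Bool := (l.drop 1).dropLast

inductive TasepStep : List Bool → List Bool → Prop
  | inject (A : List Bool) : TasepStep (false :: A) (true :: A)
  | extract (A : List Bool) : TasepStep (A ++ [true]) (A ++ [false])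
  | hop (A A' : List Bool) : TasepStep (A ++ true :: false :: A') (A ++ false :: true :: A')

lemma rate_ne_zero_of_tasepStep {α β : ℝ} (hα : 0 < α) (hβ : 0 < β) {C C' : List Bool}
    (h : TasepStep C C') : rate α β C C' ≠ 0 := by
  unfold rate
  split_ifs with h₁ h₂ h₃
  · exact hα.ne'
  · exact hβ.ne'
  · exact one_ne_zero
  · cases h with
    | inject A => exact absurd ⟨A, rfl, rfl⟩ h₁
    | extract A => exact absurd ⟨A, rfl, rfl⟩ h₂
    | hop A A' => exact absurd ⟨A, A', rfl, rfl⟩ h₃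

lemma tasepStep_inject_dropEnds {D : List Bool} (hD : D ≠ []) :
    TasepStep (dropEnds (true :: false :: D)) (dropEnds (true :: true :: D)) := by
  simpa [dropEnds, dropLast_cons_of_ne_nil hD] using TasepStep.inject D.dropLast

lemma tasepStep_extract_dropEnds {X : List Bool} (hX : X ≠ []) :
    TasepStep (dropEnds (X ++ [true, false])) (dropEnds (X ++ [false, false])) := by
  obtain ⟨x, X, rfl⟩ := exists_cons_of_ne_nil hX
  simpa [dropEnds, dropLast_append_of_ne_nil] using TasepStep.extract X

lemma tasepStep_hop_dropEnds {X D : List Bool} (hX : X ≠ []) (hD : D ≠ []) :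
    TasepStep (dropEnds (X ++ true :: false :: D)) (dropEnds (X ++ false :: true :: D)) := by
  obtain ⟨x, X, rfl⟩ := exists_cons_of_ne_nil hX
  simpa [dropEnds, dropLast_append_of_ne_nil, dropLast_cons_of_ne_nil hD]
    using TasepStep.hop X D.dropLast

lemma target_of_prev_true (Z D : List Bool) (k : ℕ) :
    target (Z ++ true :: (replicate k false ++ true :: D)) (Z.length + k + 1) = Z.length := by
  have hw : Z ++ true :: (replicate k false ++ true :: D)
      = (Z ++ true :: replicate k false) ++ true :: D := by simp
  have htake : (Z ++ true :: (replicate k false ++ true :: D)).take (Z.length + k + 1)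
      = Z ++ true :: replicate k false := by
    rw [hw]; exact take_left' (by simp; omega)
  have hget : (Z ++ true :: (replicate k false ++ true :: D)).getD (Z.length + k + 1) true
      = true := by
    rw [hw, getD_append_right _ _ _ _ (by simp; omega)]; simp
  have hfind : ((Z ++ true :: replicate k false).reverse).findIdx (fun b => b) = k := by
    simpa using findIdx_replicate_append_cons (p := fun b => b) rfl rfl k Z.reverse
  simp only [target, hget, if_true, prevTrueIdx, htake, hfind]
  rw [if_pos (by omega)]; omega

lemma target_zero_of_no_prev_true (D : List Bool) (k : ℕ) :
    target (replicate (k + 1) true ++ false :: D) 0 = k + 1 := by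
  simp [target, prevTrueIdx,
    findIdx_replicate_append_cons (p := fun b => !b) (a := true) (x := false) rfl rfl]

lemma target_of_next_false (P D : List Bool) (k : ℕ) :
    target (P ++ false :: (replicate k true ++ false :: D)) P.length = P.length + k + 1 := by
  have hdrop : (P ++ false :: (replicate k true ++ false :: D)).drop (P.length + 1)
      = replicate k true ++ false :: D := by
    rw [show P ++ false :: (replicate k true ++ false :: D)
      = (P ++ [false]) ++ (replicate k true ++ false :: D) by simp]
    exact drop_left' (by simp)
  have hfind : (replicate k true ++ false :: D).findIdx (fun b => !b) = k :=
    findIdx_replicate_append_cons (p := fun b => !b) (a := true) (x := false) rfl rfl k D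
  simp only [target, getD_append_right _ _ _ _ le_rfl, Nat.sub_self, getD_cons_zero,
    Bool.false_eq_true, if_false, nextFalseIdx, hdrop, hfind]
  rw [if_pos (by simp)]
  omega

lemma target_last_of_no_next_false (Z : List Bool) (k : ℕ) :
    target (Z ++ true :: replicate (k + 1) false) (Z.length + k + 1) = Z.length := by
  have hget : (Z ++ true :: replicate (k + 1) false).getD (Z.length + k + 1) true = false := by
    rw [getD_append_right _ _ _ _ (by omega)]
    simp [show Z.length + k + 1 - Z.length = k + 1 by omega]
  have hfind : (Z ++ true :: replicate (k + 1) false).reverse.findIdx (fun b => b) = k + 1 := by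
    simpa using findIdx_replicate_append_cons (p := fun b => b) rfl rfl (k + 1) Z.reverse
  simp only [target, hget, Bool.false_eq_true, if_false, nextFalseIdx, hfind]
  rw [if_neg (by simp; omega)]
  simp

lemma target_lt_length {w : List Bool} {i : ℕ} (hi : i < w.length) (hw : false ∈ w) :
    target w i < w.length := by
  unfold target prevTrueIdx nextFalseIdx
  split_ifs with _ _ h
  · omega
  · exact findIdx_lt_length_of_exists ⟨false, hw, rfl⟩
  · simp only [length_drop] at h
    omega
  · omega

def TasepStepAlongPi (w : List Bool) (i : ℕ) : Prop :=
  TasepStep (dropEnds (sprout w i)) (dropEnds (sprout w (target w i)))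

lemma tasepStepAlongPi_of_prev_true (Z D : List Bool) (k : ℕ) (hD : D ≠ []) :
    TasepStepAlongPi (Z ++ true :: (replicate k false ++ true :: D)) (Z.length + k + 1) := by
  have h₁ : sprout (Z ++ true :: (replicate k false ++ true :: D)) (Z.length + k + 1)
      = (Z ++ true :: replicate k false) ++ true :: false :: D := by
    simpa [Nat.add_assoc] using sprout_append_cons (Z ++ true :: replicate k false) D true
  have h₂ : sprout (Z ++ true :: (replicate k false ++ true :: D)) Z.length
      = (Z ++ true :: replicate k false) ++ false :: true :: D := by
    rw [sprout_append_cons]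
    simp [cons_replicate_append]
  rw [TasepStepAlongPi, target_of_prev_true, h₁, h₂]
  exact tasepStep_hop_dropEnds (by simp) hD

lemma tasepStepAlongPi_inject (D : List Bool) (k : ℕ) :
    TasepStepAlongPi (replicate (k + 1) true ++ false :: D) 0 := by
  have h : sprout (replicate (k + 1) true ++ false :: D) (k + 1)
      = true :: true :: (replicate k true ++ false :: D) := by
    simpa [replicate_succ, cons_replicate_append]
      using sprout_append_cons (replicate (k + 1) true) D false
  rw [TasepStepAlongPi, target_zero_of_no_prev_true, h]
  exact tasepStep_inject_dropEnds (by simp)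

lemma tasepStepAlongPi_of_next_false (P D : List Bool) (k : ℕ) (hP : P ≠ []) :
    TasepStepAlongPi (P ++ false :: (replicate k true ++ false :: D)) P.length := by
  have h₂ : sprout (P ++ false :: (replicate k true ++ false :: D)) (P.length + k + 1)
      = P ++ false :: true :: (replicate k true ++ false :: D) := by
    simpa [Nat.add_assoc, cons_replicate_append]
      using sprout_append_cons (P ++ false :: replicate k true) D false
  rw [TasepStepAlongPi, target_of_next_false, h₂, sprout_append_cons]
  exact tasepStep_hop_dropEnds hP (by simp)

lemma tasepStepAlongPi_extract (Z : List Bool) (k : ℕ) :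
    TasepStepAlongPi (Z ++ true :: replicate (k + 1) false) (Z.length + k + 1) := by
  have h₁ : sprout (Z ++ true :: replicate (k + 1) false) (Z.length + k + 1)
      = (Z ++ true :: replicate k false) ++ [true, false] := by
    simpa [Nat.add_assoc, replicate_succ'] using
      sprout_append_cons (Z ++ true :: replicate k false) [] false
  have h₂ : sprout (Z ++ true :: replicate (k + 1) false) Z.length
      = (Z ++ true :: replicate k false) ++ [false, false] := by
    rw [sprout_append_cons]
    simp [replicate_succ', cons_replicate_append]
  rw [TasepStepAlongPi, target_last_of_no_next_false, h₁, h₂]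
  exact tasepStep_extract_dropEnds (by simp)

lemma tasepStepAlongPi_left_child {u P S : List Bool}
    (h : true :: (u ++ [false]) = P ++ true :: S) :
    TasepStepAlongPi (P ++ true :: S) P.length := by
  rcases P.eq_replicate_or_eq_append_not_cons_replicate false with hP | ⟨Z, k, rfl⟩
  · obtain rfl : P = [] := by
      cases P with
      | nil => rfl
      | cons y P =>
        rw [length_cons, replicate_succ, cons.injEq] at hP
        simp [hP.1] at h
    rcases S.eq_replicate_or_eq_replicate_append_not_cons true with hS | ⟨k, D, rfl⟩
    · have hmem : false ∈ S := by simp [← (cons.inj h).2]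
      rw [hS] at hmem
      simp at hmem
    · simpa [replicate_succ] using tasepStepAlongPi_inject D k
  · have hS : S ≠ [] := by
      rintro rfl
      have h' : (true :: u) ++ [false] = (Z ++ true :: replicate k false) ++ [true] := by
        simpa using h
      simpa using (append_inj' h' rfl).2
    simpa [Nat.add_assoc] using tasepStepAlongPi_of_prev_true Z S k hS

lemma tasepStepAlongPi_right_child {u P S : List Bool}
    (h : true :: (u ++ [false]) = P ++ false :: S) :
    TasepStepAlongPi (P ++ false :: S) P.length := by
  obtain ⟨y, P', rfl⟩ : ∃ y P', P = y :: P' := by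
    cases P with
    | nil => simp at h
    | cons y P' => exact ⟨y, P', rfl⟩
  rcases S.eq_replicate_or_eq_replicate_append_not_cons true with hS | ⟨k, D, rfl⟩
  · obtain rfl : S = [] := by
      rcases S.eq_nil_or_concat with rfl | ⟨L, z, rfl⟩
      · rfl
      · have h' : (true :: u) ++ [false] = (y :: P' ++ false :: L) ++ [z] := by simpa using h
        obtain rfl : z = false := by simpa using ((append_inj' h' rfl).2).symm
        simp [replicate_succ'] at hS
    rcases (y :: P').eq_replicate_or_eq_append_not_cons_replicate false with hP | ⟨Z, k, hP⟩
    · rw [length_cons, replicate_succ, cons.injEq] at hP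
      simp [hP.1] at h
    · rw [hP]
      simpa [replicate_succ', Nat.add_assoc] using tasepStepAlongPi_extract Z k
  · exact tasepStepAlongPi_of_next_false _ D k (cons_ne_nil y P')

lemma tasepStepAlongPi_of_lt (u : List Bool) {i : ℕ}
    (hi : i < (true :: (u ++ [false])).length) :
    TasepStepAlongPi (true :: (u ++ [false])) i := by
  obtain ⟨P, x, S, hw, rfl⟩ : ∃ P x S, true :: (u ++ [false]) = P ++ x :: S ∧ P.length = i :=
    ⟨_, _, _, by rw [getElem_cons_drop hi, take_append_drop],
      length_take_of_le hi.le⟩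
  rw [hw]
  cases x
  · exact tasepStepAlongPi_right_child hw
  · exact tasepStepAlongPi_left_child hw

end Words

namespace PTree

lemma length_dirsAux (T : PTree) (b : Bool) : (T.dirsAux b).length = T.numLeaves := by
  induction T generalizing b with
  | leaf => rfl
  | node l r ihl ihr => simp [dirsAux, numLeaves, ihl, ihr]

lemma exists_dirsAux_true_eq_cons (T : PTree) : ∃ v, T.dirsAux true = true :: v := by
  induction T with
  | leaf => exact ⟨[], rfl⟩
  | node l r ihl _ =>
    obtain ⟨v, hv⟩ := ihl
    exact ⟨v ++ r.dirsAux false, by simp [dirsAux, hv]⟩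

lemma exists_dirsAux_false_eq_concat (T : PTree) : ∃ v, T.dirsAux false = v ++ [false] := by
  induction T with
  | leaf => exact ⟨[], rfl⟩
  | node l r _ ihr =>
    obtain ⟨v, hv⟩ := ihr
    exact ⟨l.dirsAux true ++ v, by simp [dirsAux, hv]⟩

lemma exists_dirs_node_eq (l r : PTree) : ∃ u, (node l r).dirs = true :: (u ++ [false]) := by
  obtain ⟨v, hv⟩ := l.exists_dirsAux_true_eq_cons
  obtain ⟨v', hv'⟩ := r.exists_dirsAux_false_eq_concat
  exact ⟨v ++ v', by simp [dirs, hv, hv']⟩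

lemma length_dirs_node (l r : PTree) : (node l r).dirs.length = (node l r).numLeaves :=
  length_dirsAux (node l r) true

end PTree

namespace MTree

lemma numLeaves_forget (M : MTree) : M.forget.numLeaves = M.collapseT.numLeaves + 1 := by
  induction M with
  | mark => rfl
  | nodeL l r ih => simp [forget, collapseT, PTree.numLeaves, ih]; omega
  | nodeR l r ih => simp [forget, collapseT, PTree.numLeaves, ih]; omega

lemma markIdx_lt (M : MTree) : M.markIdx < M.collapseT.numLeaves := by
  induction M with
  | mark => simp [markIdx, collapseT, PTree.numLeaves]
  | nodeL l r ih => simp [markIdx, collapseT, PTree.numLeaves]; omega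
  | nodeR l r ih => simp [markIdx, collapseT, PTree.numLeaves]; omega

lemma dirsAux_forget (M : MTree) (b : Bool) :
    M.forget.dirsAux b = sprout (M.collapseT.dirsAux b) M.markIdx := by
  induction M generalizing b with
  | mark => rfl
  | nodeL l r ih =>
    have hl : l.markIdx < (l.collapseT.dirsAux true).length := by
      rw [PTree.length_dirsAux]; exact l.markIdx_lt
    simp only [forget, collapseT, markIdx, PTree.dirsAux, ih, sprout_append_of_lt hl]
  | nodeR l r ih =>
    simp only [forget, collapseT, markIdx, PTree.dirsAux, ih, ← PTree.length_dirsAux l true,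
      sprout_append_add]

lemma dirs_forget (M : MTree) : M.forget.dirs = sprout M.collapseT.dirs M.markIdx := by
  cases M with
  | mark => rfl
  | nodeL l r => exact dirsAux_forget (nodeL l r) true
  | nodeR l r => exact dirsAux_forget (nodeR l r) true

end MTree

lemma collapseT_expand (T : PTree) (j : ℕ) : (expand T j).collapseT = T := by
  induction T generalizing j with
  | leaf => rfl
  | node l r ihl ihr =>
    unfold expand
    split <;> simp [MTree.collapseT, ihl, ihr]

lemma markIdx_expand {T : PTree} {j : ℕ} (hj : j < T.numLeaves) : (expand T j).markIdx = j := by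
  induction T generalizing j with
  | leaf =>
    obtain rfl : j = 0 := by simpa [PTree.numLeaves] using hj
    rfl
  | node l r ihl ihr =>
    unfold expand
    split
    · exact ihl ‹_›
    · simp only [PTree.numLeaves] at hj
      simp [MTree.markIdx, ihr (j := j - l.numLeaves) (by omega)]
      omega

lemma dirs_forget_expand {T : PTree} {j : ℕ} (hj : j < T.numLeaves) :
    (expand T j).forget.dirs = sprout T.dirs j := by
  rw [MTree.dirs_forget, collapseT_expand, markIdx_expand hj]

/-- if `T̂ = π(T̂')` then the TASEP allows the transition
`R(f(T̂')) → R(f(T̂))`, i.e. `W(C' → C) ≠ 0`. -/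
theorem rate_ne_zero_along_pi (n : ℕ) (hn : 1 ≤ n) (α β : ℝ)
    (hα : α ∈ Set.Ioc (0:ℝ) 1) (hβ : β ∈ Set.Ioc (0:ℝ) 1)
    (M : MTree) (hM : M.forget.numLeaves = n + 2) :
    rate α β M.forget.red (piM M).forget.red ≠ 0 := by
  obtain ⟨l, r, hT⟩ : ∃ l r, M.collapseT = .node l r := by
    have h := M.numLeaves_forget
    cases hc : M.collapseT with
    | leaf => simp [hc, PTree.numLeaves] at h; omega
    | node l r => exact ⟨l, r, rfl⟩
  obtain ⟨u, hu⟩ := PTree.exists_dirs_node_eq l r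
  have hw : M.collapseT.dirs = true :: (u ++ [false]) := hT ▸ hu
  have hlen : M.collapseT.numLeaves = (true :: (u ++ [false])).length := by
    rw [← hw, hT, PTree.length_dirs_node]
  have hi : M.markIdx < (true :: (u ++ [false])).length := hlen ▸ M.markIdx_lt
  have hj : target M.collapseT.dirs M.markIdx < M.collapseT.numLeaves := by
    rw [hw, hlen]
    exact target_lt_length hi (by simp)
  have hstep := tasepStepAlongPi_of_lt u hi
  rw [← hw] at hstep
  rw [PTree.red, PTree.red, MTree.dirs_forget, piM, dirs_forget_expand hj]
  exact rate_ne_zero_of_tasepStep hα.1 hβ.1 hstep
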